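/- arXiv:1410.1631 — 2 statements merged into one kernel-verified Lean document; each statement's English description precedes it below -/
import Mathlib

section
/- Let r ∈ ℕ with r ≥ 2 and t > 0. Consider the infinite trihedral angle with dihedral angles (θ₁₂, θ₂₃, θ₃₁) = (π/r, π/2, π/2), parametrized in cylindrical coordinates as {(ρ, θ, z) : ρ > 0, 0 < θ < π/r, z > 0}. Then the contribution of the group elements (R_{a₁}·R_{a₂})^k · R_{a₃}, k = 1, …, r−1 (the elements of C′_r × {R_{a₃}}) to the constant term of the Dirichlet partition function equals I_const(r) = − ∫₀^∞ ∫₀^{π/r} ∫₀^∞ (1/(4πt)) ( Σ_{k=1}^{r−1} exp(−(ρ²/t) sin²(kπ/r)) ) · (1/√(4πt)) exp(−z²/t) · ρ dρ dθ dz = −(1/(32r)) Σ_{k=1}^{r−1} 1/sin²(kπ/r) = −(r² − 1)/(96r); in particular the value is independent of t. -/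
/-!
The heat kernel factorises, so the triple integral splits: each radial integral
`∫₀^∞ ρ exp(-(ρ²/t) sin²(kπ/r)) dρ = t / (2 sin²(kπ/r))`, the angular one gives `π/r`,
and the image kernel in `z` has mass `∫₀^∞ exp(-z²/t) dz / √(4πt) = 1/4`, which leaves
`(1/(32r)) Σ 1/sin²(kπ/r)`.

The cosecant sum is Parseval's identity for the discrete Fourier transform of `j ↦ j`
on `{0, …, n-1}`: with `ω = exp(2πi/n)`, its `k`-th coefficient is `n/(ωᵏ - 1)` for
`k ≠ 0` and `|ωᵏ - 1| = 2 sin(kπ/n)`, so `Σₖ n²/(4 sin²(kπ/n)) + (Σ j)² = n Σ j²`.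
-/

open Real MeasureTheory Finset ComplexConjugate

theorem integral_Ioi_mul_exp_neg_mul_sq {b : ℝ} (hb : 0 < b) :
    ∫ x in Set.Ioi (0 : ℝ), x * exp (-b * x ^ 2) = (2 * b)⁻¹ := by
  have := integral_mul_cexp_neg_mul_sq (b := (b : ℂ)) (by simpa)
  exact_mod_cast this

theorem integral_Ioi_sum_exp_mul_self {ι : Type*} (s : Finset ι) {t : ℝ} (ht : 0 < t)
    {a : ι → ℝ} (ha : ∀ k ∈ s, a k ≠ 0) :
    ∫ ρ in Set.Ioi (0 : ℝ), (∑ k ∈ s, exp (-(ρ ^ 2 / t) * a k ^ 2)) * ρ =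
      t / 2 * ∑ k ∈ s, 1 / a k ^ 2 := by
  have hb : ∀ k ∈ s, 0 < a k ^ 2 / t := fun k hk => by have := ha k hk; positivity
  calc ∫ ρ in Set.Ioi (0 : ℝ), (∑ k ∈ s, exp (-(ρ ^ 2 / t) * a k ^ 2)) * ρ
      = ∫ ρ in Set.Ioi (0 : ℝ), ∑ k ∈ s, ρ * exp (-(a k ^ 2 / t) * ρ ^ 2) := by
        congr 1 with ρ
        rw [Finset.sum_mul]
        congr 1 with k
        ring_nf
    _ = ∑ k ∈ s, (2 * (a k ^ 2 / t))⁻¹ := by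
        rw [integral_finsetSum _ fun k hk => (integrable_mul_exp_neg_mul_sq (hb k hk)).integrableOn]
        exact Finset.sum_congr rfl fun k hk => integral_Ioi_mul_exp_neg_mul_sq (hb k hk)
    _ = t / 2 * ∑ k ∈ s, 1 / a k ^ 2 := by
        rw [Finset.mul_sum]
        refine Finset.sum_congr rfl fun k hk => ?_
        have := ha k hk
        field_simp

theorem integral_Ioi_exp_neg_sq_div_mul_sqrt {t : ℝ} (ht : 0 < t) :
    ∫ z in Set.Ioi (0 : ℝ), 1 / √(4 * π * t) * exp (-z ^ 2 / t) = 1 / 4 := by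
  have hsqrt : √(4 * π * t) = 2 * √(π * t) := by
    rw [show 4 * π * t = 2 ^ 2 * (π * t) by ring, sqrt_mul (by positivity), sqrt_sq zero_le_two]
  simp_rw [show ∀ z : ℝ, -z ^ 2 / t = -t⁻¹ * z ^ 2 from fun z => by ring]
  rw [integral_const_mul, integral_gaussian_Ioi, div_inv_eq_mul, hsqrt]
  field_simp
  norm_num

theorem integral_wedge_heat_kernel {ι : Type*} (s : Finset ι) (Θ : ℝ) {t : ℝ} (ht : 0 < t)
    {a : ι → ℝ} (ha : ∀ k ∈ s, a k ≠ 0) :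
    ∫ z in Set.Ioi (0 : ℝ), ∫ θ in (0 : ℝ)..Θ, ∫ ρ in Set.Ioi (0 : ℝ),
      1 / (4 * π * t) * (∑ k ∈ s, exp (-(ρ ^ 2 / t) * a k ^ 2)) *
        (1 / √(4 * π * t) * exp (-z ^ 2 / t)) * ρ =
      Θ / (32 * π) * ∑ k ∈ s, 1 / a k ^ 2 := by
  have radial : ∀ z : ℝ, ∫ ρ in Set.Ioi (0 : ℝ),
      1 / (4 * π * t) * (∑ k ∈ s, exp (-(ρ ^ 2 / t) * a k ^ 2)) *
        (1 / √(4 * π * t) * exp (-z ^ 2 / t)) * ρ =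
      1 / (4 * π * t) * (t / 2 * ∑ k ∈ s, 1 / a k ^ 2) *
        (1 / √(4 * π * t) * exp (-z ^ 2 / t)) := by
    intro z
    rw [← integral_Ioi_sum_exp_mul_self s ht ha, ← integral_const_mul, ← integral_mul_const]
    congr 1 with ρ
    ring
  simp_rw [radial, intervalIntegral.integral_const, smul_eq_mul, sub_zero]
  rw [integral_const_mul, integral_const_mul, integral_Ioi_exp_neg_sq_div_mul_sqrt ht]
  field_simp
  ring

theorem IsPrimitiveRoot.sum_range_pow_mul_inv_pow {K : Type*} [Field K] {ω : K} {n i j : ℕ}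
    (hω : IsPrimitiveRoot ω n) (hi : i < n) (hj : j < n) :
    ∑ k ∈ range n, (ω ^ i * (ω ^ j)⁻¹) ^ k = if i = j then (n : K) else 0 := by
  have hω0 : ω ≠ 0 := hω.ne_zero (by omega)
  split_ifs with hij
  · simp [hij, hω0]
  · have hne : ω ^ i * (ω ^ j)⁻¹ ≠ 1 := by
      rw [Ne, mul_inv_eq_one₀ (pow_ne_zero _ hω0)]
      exact fun h => hij (hω.pow_inj hi hj h)
    rw [geom_sum_eq hne, mul_pow, inv_pow, ← pow_mul, ← pow_mul, mul_comm i, mul_comm j,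
      pow_mul, pow_mul, hω.pow_eq_one]
    simp

theorem IsPrimitiveRoot.sum_norm_sq_sum_mul_pow {ω : ℂ} {n : ℕ} (hω : IsPrimitiveRoot ω n)
    (a : ℕ → ℂ) :
    ∑ k ∈ range n, ‖∑ j ∈ range n, a j * ω ^ (j * k)‖ ^ 2 =
      n * ∑ j ∈ range n, ‖a j‖ ^ 2 := by
  rcases n.eq_zero_or_pos with rfl | hn
  · simp
  have hconj : conj ω = ω⁻¹ := (Complex.inv_eq_conj (hω.norm'_eq_one hn.ne')).symm
  apply Complex.ofReal_injective
  push_cast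
  simp_rw [← Complex.mul_conj']
  calc _ = ∑ i ∈ range n, ∑ j ∈ range n,
          a i * conj (a j) * ∑ k ∈ range n, (ω ^ i * (ω ^ j)⁻¹) ^ k := by
        simp_rw [map_sum, map_mul, map_pow, hconj, sum_mul_sum, mul_sum]
        rw [sum_comm]
        refine sum_congr rfl fun i _ => ?_
        rw [sum_comm]
        refine sum_congr rfl fun j _ => sum_congr rfl fun k _ => ?_
        rw [mul_pow, inv_pow, pow_mul, pow_mul, inv_pow]
        ring
    _ = n * ∑ j ∈ range n, a j * conj (a j) := by
        rw [mul_sum]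
        refine sum_congr rfl fun i hi => ?_
        rw [sum_congr rfl fun j hj => by
          rw [hω.sum_range_pow_mul_inv_pow (mem_range.1 hi) (mem_range.1 hj)]]
        simp [hi, mul_comm]

theorem sub_one_mul_sum_range_natCast_mul_pow {R : Type*} [CommRing R] (z : R) (n : ℕ) :
    (z - 1) * ∑ j ∈ range n, (j : R) * z ^ j = n * z ^ n - z * ∑ j ∈ range n, z ^ j := by
  induction n with
  | zero => simp
  | succ n ih =>
    simp only [sum_range_succ, Nat.cast_succ]
    linear_combination ih

theorem IsPrimitiveRoot.sub_one_mul_sum_range_mul_pow {K : Type*} [Field K] {ω : K} {n k : ℕ}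
    (hω : IsPrimitiveRoot ω n) (hk0 : 0 < k) (hkn : k < n) :
    (ω ^ k - 1) * ∑ j ∈ range n, (j : K) * ω ^ (j * k) = n := by
  have hne : ω ^ k ≠ 1 := hω.pow_ne_one_of_pos_of_lt hk0.ne' hkn
  have hpow : (ω ^ k) ^ n = 1 := by rw [← pow_mul, mul_comm, pow_mul, hω.pow_eq_one, one_pow]
  simp_rw [pow_mul']
  rw [sub_one_mul_sum_range_natCast_mul_pow, geom_sum_eq hne, hpow]
  simp

theorem one_div_sin_sq_eq_norm_sq_sum_mul_pow {n k : ℕ} (hk0 : 0 < k) (hkn : k < n) :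
    1 / sin (k * π / n) ^ 2 =
      4 * ‖∑ j ∈ range n, (j : ℂ) * Complex.exp (2 * π * Complex.I / n) ^ (j * k)‖ ^ 2 /
        n ^ 2 := by
  have hn : (n : ℝ) ≠ 0 := Nat.cast_ne_zero.2 (by omega)
  have hω := Complex.isPrimitiveRoot_exp n (by omega)
  have hnorm := congrArg (‖·‖ ^ 2) (hω.sub_one_mul_sum_range_mul_pow hk0 hkn)
  have hexp : Complex.exp (2 * π * Complex.I / n) ^ k =
      Complex.exp (Complex.I * ↑(2 * π * k / n)) := by
    rw [← Complex.exp_nat_mul]; push_cast; ring_nf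
  simp only [norm_mul, mul_pow, hexp, Complex.norm_exp_I_mul_ofReal_sub_one,
    Complex.norm_natCast] at hnorm
  rw [show 2 * π * k / n / 2 = k * π / n by ring] at hnorm
  simp only [Real.norm_eq_abs, sq_abs] at hnorm
  have hs : sin (k * π / n) ≠ 0 := by
    intro h
    rw [h, zero_pow two_ne_zero, mul_zero, zero_mul, eq_comm, sq_eq_zero_iff] at hnorm
    exact hn hnorm
  field_simp
  linear_combination -hnorm

theorem sum_range_natCast {K : Type*} [Field K] [CharZero K] (n : ℕ) :
    ∑ j ∈ range n, (j : K) = n * (n - 1) / 2 := by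
  induction n with
  | zero => simp
  | succ n ih => rw [sum_range_succ, ih]; push_cast; ring

theorem sum_range_natCast_sq {K : Type*} [Field K] [CharZero K] (n : ℕ) :
    ∑ j ∈ range n, (j : K) ^ 2 = n * (n - 1) * (2 * n - 1) / 6 := by
  induction n with
  | zero => simp
  | succ n ih => rw [sum_range_succ, ih]; push_cast; ring

theorem sum_one_div_sin_sq {n : ℕ} (hn : n ≠ 0) :
    ∑ k ∈ Icc 1 (n - 1), 1 / sin (k * π / n) ^ 2 = ((n : ℝ) ^ 2 - 1) / 3 := by
  set ω := Complex.exp (2 * π * Complex.I / n)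
  set S : ℕ → ℝ := fun k => ‖∑ j ∈ range n, (j : ℂ) * ω ^ (j * k)‖ ^ 2
  have parseval := (Complex.isPrimitiveRoot_exp n hn).sum_norm_sq_sum_mul_pow (fun j => (j : ℂ))
  have split : ∑ k ∈ range n, S k = S 0 + ∑ k ∈ Icc 1 (n - 1), S k := by
    rw [range_eq_Ico, sum_eq_sum_Ico_succ_bot (Nat.pos_of_ne_zero hn),
      Icc_sub_one_right_eq_Ico_of_not_isMin (by simpa using hn)]
  have hS0 : S 0 = (∑ j ∈ range n, (j : ℝ)) ^ 2 := by
    simp only [S, mul_zero, pow_zero, mul_one]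
    rw [← Nat.cast_sum, Complex.norm_natCast, Nat.cast_sum]
  have hsq : ∑ j ∈ range n, ‖(j : ℂ)‖ ^ 2 = ∑ j ∈ range n, (j : ℝ) ^ 2 := by
    simp only [Complex.norm_natCast]
  have hcsc : ∀ k ∈ Icc 1 (n - 1), 1 / sin (k * π / n) ^ 2 = 4 * S k / n ^ 2 := fun k hk => by
    rw [mem_Icc] at hk
    exact one_div_sin_sq_eq_norm_sq_sum_mul_pow (by omega) (by omega)
  rw [split, hS0, hsq, sum_range_natCast, sum_range_natCast_sq] at parseval
  rw [sum_congr rfl hcsc, ← sum_div, ← mul_sum]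
  rw [eq_sub_of_add_eq' parseval]
  field_simp
  ring

theorem sin_nat_mul_pi_div_pos {n k : ℕ} (hk0 : 0 < k) (hkn : k < n) : 0 < sin (k * π / n) := by
  have hk0' : (0 : ℝ) < k := by exact_mod_cast hk0
  have hkn' : (k : ℝ) < n := by exact_mod_cast hkn
  apply sin_pos_of_pos_of_lt_pi
  · exact div_pos (mul_pos hk0' pi_pos) (hk0'.trans hkn')
  · rw [div_lt_iff₀ (hk0'.trans hkn')]
    nlinarith [pi_pos]

/-- For the infinite trihedral angle `(2,2,r)` with dihedral angles `(π/r, π/2, π/2)`,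
the contribution of the elements of `C′_r × {R_{a₃}}` to the constant term of the
Dirichlet partition function is
`I_const(r) = −∫₀^∞∫₀^{π/r}∫₀^∞ (1/(4πt)) Σ_{k=1}^{r−1} exp(−(ρ²/t) sin²(kπ/r)) ·
 (1/√(4πt)) exp(−z²/t) ρ dρ dθ dz = −(1/(32r)) Σ_{k=1}^{r−1} 1/sin²(kπ/r) = −(r²−1)/(96r)`,
independently of `t`. -/
theorem trihedral_constant_term (r : ℕ) (hr : 2 ≤ r) (t : ℝ) (ht : 0 < t) :
    -(∫ z in Set.Ioi (0:ℝ),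
        ∫ θ in (0:ℝ)..(Real.pi / r),
          ∫ ρ in Set.Ioi (0:ℝ),
            (1 / (4 * Real.pi * t)) *
                (∑ k ∈ Finset.Icc 1 (r - 1),
                  Real.exp (-(ρ ^ 2 / t) * Real.sin ((k : ℝ) * Real.pi / r) ^ 2)) *
              ((1 / Real.sqrt (4 * Real.pi * t)) * Real.exp (-z ^ 2 / t)) * ρ) =
      -(1 / (32 * (r : ℝ))) *
        (∑ k ∈ Finset.Icc 1 (r - 1), 1 / Real.sin ((k : ℝ) * Real.pi / r) ^ 2) ∧
    -(1 / (32 * (r : ℝ))) *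
        (∑ k ∈ Finset.Icc 1 (r - 1), 1 / Real.sin ((k : ℝ) * Real.pi / r) ^ 2) =
      -(((r : ℝ) ^ 2 - 1) / (96 * r)) := by
  have hsin : ∀ k ∈ Icc 1 (r - 1), sin ((k : ℝ) * π / r) ≠ 0 := fun k hk => by
    rw [mem_Icc] at hk; exact (sin_nat_mul_pi_div_pos (by omega) (by omega)).ne'
  constructor
  · rw [integral_wedge_heat_kernel _ _ ht hsin]
    field_simp
  · rw [sum_one_div_sin_sq (by omega)]
    field_simp
    ring
end

section
/- Let a, b > 0 and consider the Dirichlet Laplacian on the rectangle (0, a) × (0, b), whose eigenvalues are λ_{k,l} = π²(k²/a² + l²/b²) for integers k, l ≥ 1. Then the Dirichlet partition function Z(t) = Σ_{k=1}^∞ Σ_{l=1}^∞ exp(−π²(k²/a² + l²/b²) t) satisfies lim_{t→0⁺} ( Z(t) − ab/(4πt) + (a + b)/(4√(πt)) ) = 1/4; that is, Z(t) ∼ |Ω|/(4πt) − |∂Ω|/(8√(πt)) + 1/4 as t → 0⁺, where |Ω| = ab and |∂Ω| = 2(a + b). -/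
open Real Filter Topology

/-
Z(t) factors as θ(π²t/a²) θ(π²t/b²), where θ(A) = ∑_{n ≥ 1} e^{-A n²}. Jacobi's theta
transformation (Poisson summation for the Gaussian) gives
θ(π²t/c²) = c/(2√(πt)) − 1/2 + (c/√(πt)) θ(c²/t), and since θ(A) ≤ e^{-A}/(1 − e^{-A}),
the remainder θ(c²/t) vanishes faster than t as t → 0⁺. Multiplying out the two expansions, the only terms that survive
besides ab/(4πt) − (a + b)/(4√(πt)) are the product of the constants, (−1/2)² = 1/4.
-/

noncomputable def thetaTail (A : ℝ) : ℝ := ∑' n : ℕ, exp (-A * ((n : ℝ) + 1) ^ 2)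

lemma exp_neg_mul_sq_le_pow {A : ℝ} (hA : 0 ≤ A) (n : ℕ) :
    exp (-A * (n : ℝ) ^ 2) ≤ exp (-A) ^ n := by
  rw [← exp_nat_mul, exp_le_exp]
  have hn : (n : ℝ) ≤ (n : ℝ) ^ 2 := by exact_mod_cast Nat.le_self_pow two_ne_zero n
  nlinarith

lemma summable_exp_neg_mul_int_sq {A : ℝ} (hA : 0 < A) :
    Summable fun n : ℤ => exp (-A * (n : ℝ) ^ 2) := by
  have hnat : Summable fun n : ℕ => exp (-A * (n : ℝ) ^ 2) :=
    (summable_geometric_of_lt_one (exp_pos _).le (exp_lt_one_iff.mpr (by linarith))).of_nonneg_of_le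
      (fun _ => (exp_pos _).le) (exp_neg_mul_sq_le_pow hA.le)
  exact Summable.of_nat_of_neg (by simpa using hnat) (by simpa using hnat)

lemma tsum_int_exp_neg_mul_sq {A : ℝ} (hA : 0 < A) :
    ∑' n : ℤ, exp (-A * (n : ℝ) ^ 2) = 1 + 2 * thetaTail A := by
  rw [tsum_int_eq_zero_add_two_mul_tsum_pnat (fun n => by simp) (summable_exp_neg_mul_int_sq hA)]
  simp only [Int.cast_natCast]
  rw [tsum_pnat_eq_tsum_succ (f := fun n : ℕ => exp (-A * (n : ℝ) ^ 2))]
  simp [thetaTail]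

lemma thetaTail_nonneg (A : ℝ) : 0 ≤ thetaTail A :=
  tsum_nonneg fun _ => (exp_pos _).le

lemma thetaTail_le {A : ℝ} (hA : 0 < A) : thetaTail A ≤ exp (-A) / (1 - exp (-A)) := by
  set r := exp (-A)
  have hgeom : HasSum (fun n : ℕ => r ^ (n + 1)) (r / (1 - r)) := by
    simpa [pow_succ', div_eq_mul_inv] using
      (hasSum_geometric_of_lt_one (exp_pos _).le (exp_lt_one_iff.mpr (by linarith))).mul_left r
  have hle (n : ℕ) : exp (-A * ((n : ℝ) + 1) ^ 2) ≤ r ^ (n + 1) := by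
    exact_mod_cast exp_neg_mul_sq_le_pow hA.le (n + 1)
  calc thetaTail A ≤ ∑' n : ℕ, r ^ (n + 1) :=
        (hgeom.summable.of_nonneg_of_le (fun _ => (exp_pos _).le) hle).tsum_le_tsum hle
          hgeom.summable
    _ = r / (1 - r) := hgeom.tsum_eq

lemma tendsto_mul_thetaTail_atTop : Tendsto (fun A => A * thetaTail A) atTop (𝓝 0) := by
  have hnum : Tendsto (fun A => A * exp (-A)) atTop (𝓝 0) := by
    simpa using tendsto_pow_mul_exp_neg_atTop_nhds_zero 1
  have hden : Tendsto (fun A => 1 - exp (-A)) atTop (𝓝 1) := by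
    simpa using tendsto_exp_neg_atTop_nhds_zero.const_sub 1
  have hbound := hnum.div hden one_ne_zero
  rw [zero_div] at hbound
  refine squeeze_zero' ?_ ?_ hbound
  · filter_upwards [eventually_ge_atTop 0] with A hA
    exact mul_nonneg hA (thetaTail_nonneg A)
  · filter_upwards [eventually_gt_atTop 0] with A hA
    rw [Pi.div_apply, mul_div_assoc]
    exact mul_le_mul_of_nonneg_left (thetaTail_le hA) hA.le

lemma tendsto_div_mul_thetaTail_sq_div {c : ℝ} (hc : c ≠ 0) :
    Tendsto (fun t => c / t * thetaTail (c ^ 2 / t)) (𝓝[>] 0) (𝓝 0) := by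
  have hA : Tendsto (fun t : ℝ => c ^ 2 / t) (𝓝[>] 0) atTop := by
    simpa [div_eq_mul_inv] using
      tendsto_inv_nhdsGT_zero.const_mul_atTop (show 0 < c ^ 2 by positivity)
  have := (tendsto_mul_thetaTail_atTop.comp hA).const_mul c⁻¹
  rw [mul_zero] at this
  refine this.congr fun t => ?_
  simp only [Function.comp]
  field_simp

lemma thetaTail_pi_sq_mul_div_sq {c t : ℝ} (hc : 0 < c) (ht : 0 < t) :
    thetaTail (π ^ 2 * t / c ^ 2) =
      c / (2 * √(π * t)) - 1 / 2 + c / √(π * t) * thetaTail (c ^ 2 / t) := by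
  have key := tsum_exp_neg_mul_int_sq (a := π * t / c ^ 2) (by positivity)
  have hsqrt : (π * t / c ^ 2) ^ (1 / 2 : ℝ) = √(π * t) / c := by
    rw [← sqrt_eq_rpow, sqrt_div' _ (by positivity), sqrt_sq hc.le]
  rw [show -π * (π * t / c ^ 2) = -(π ^ 2 * t / c ^ 2) by ring,
    show -π / (π * t / c ^ 2) = -(c ^ 2 / t) by field_simp,
    tsum_int_exp_neg_mul_sq (by positivity), tsum_int_exp_neg_mul_sq (by positivity), hsqrt] at key
  field_simp at key ⊢
  linarith

lemma tsum_tsum_exp_rectangle_eq_thetaTail_mul (a b t : ℝ) :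
    (∑' k : ℕ, ∑' l : ℕ,
        exp (-(π ^ 2 * (((k : ℝ) + 1) ^ 2 / a ^ 2 + ((l : ℝ) + 1) ^ 2 / b ^ 2)) * t)) =
      thetaTail (π ^ 2 * t / a ^ 2) * thetaTail (π ^ 2 * t / b ^ 2) := by
  rw [thetaTail, ← tsum_mul_right]
  refine tsum_congr fun k => ?_
  rw [thetaTail, ← tsum_mul_left]
  refine tsum_congr fun l => ?_
  rw [← exp_add]
  ring_nf

/-- Short-time asymptotics of the Dirichlet partition function of the rectangle
`(0,a) × (0,b)`: with eigenvalues `π²(k²/a² + l²/b²)`, `k, l ≥ 1`,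
`Z(t) − ab/(4πt) + (a + b)/(4√(πt)) → 1/4` as `t → 0⁺`. -/
theorem dirichlet_partition_rectangle_short_time (a b : ℝ) (ha : 0 < a) (hb : 0 < b) :
    Tendsto
      (fun t : ℝ =>
        (∑' k : ℕ, ∑' l : ℕ,
            Real.exp (-(Real.pi ^ 2 *
              (((k : ℝ) + 1) ^ 2 / a ^ 2 + ((l : ℝ) + 1) ^ 2 / b ^ 2)) * t)) -
          a * b / (4 * Real.pi * t) + (a + b) / (4 * Real.sqrt (Real.pi * t)))
      (nhdsWithin 0 (Set.Ioi 0)) (nhds (1 / 4)) := by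
  set s := fun t => √(π * t)
  set u := fun t => a / t * thetaTail (a ^ 2 / t)
  set v := fun t => b / t * thetaTail (b ^ 2 / t)
  have hs : Tendsto s (𝓝[>] 0) (𝓝 0) := by
    simpa using ((continuous_const.mul continuous_id).sqrt.tendsto 0).mono_left nhdsWithin_le_nhds
  have hu : Tendsto u (𝓝[>] 0) (𝓝 0) := tendsto_div_mul_thetaTail_sq_div ha.ne'
  have hv : Tendsto v (𝓝[>] 0) (𝓝 0) := tendsto_div_mul_thetaTail_sq_div hb.ne'
  have hlim : Tendsto (fun t => 1 / 4 + (a * v t + b * u t) / (2 * π)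
      - s t * (u t + v t) / (2 * π) + s t ^ 2 * u t * v t / π ^ 2) (𝓝[>] 0) (𝓝 (1 / 4)) := by
    simpa using ((tendsto_const_nhds.add
      (((hv.const_mul a).add (hu.const_mul b)).div_const (2 * π))).sub
      ((hs.mul (hu.add hv)).div_const (2 * π))).add ((((hs.pow 2).mul hu).mul hv).div_const (π ^ 2))
  refine hlim.congr' ?_
  filter_upwards [self_mem_nhdsWithin] with t (ht : 0 < t)
  simp only [s, u, v]
  rw [tsum_tsum_exp_rectangle_eq_thetaTail_mul, thetaTail_pi_sq_mul_div_sq ha ht,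
    thetaTail_pi_sq_mul_div_sq hb ht]
  generalize thetaTail (a ^ 2 / t) = X, thetaTail (b ^ 2 / t) = Y
  have hσ2 : √(π * t) ^ 2 = π * t := sq_sqrt (by positivity)
  generalize √(π * t) = σ at hσ2 ⊢
  obtain rfl : t = σ ^ 2 / π := by field_simp; linarith
  field_simp
  ring
end
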